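/- For p = 2^n with n ≥ 3, let σ̂ be the bijection of {1,…,p} that extends σ_{p,1} by setting σ̂(1) = 1. Then M_p[i,j] = M_p^*[σ̂(i), σ̂(j)] for all i and j from 1 to p, except that M_p[1, 1+p/2] = −M_p^*[σ̂(1), σ̂(1+p/2)] = n+1 and M_p[1+p/2, 1] = −M_p^*[σ̂(1+p/2), σ̂(1)] = −(n+1). -/
import Mathlib


/-- The matrix `M₄` (1-indexed). -/
def M4 (i j : ℕ) : ℤ :=
  (([[0,1,2,3],[-1,0,3,-2],[-2,-3,0,1],[-3,2,-1,0]] : List (List ℤ)).getD (i-1) []).getD (j-1) 0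

/-- The matrix `M₄*` (1-indexed). -/
def M4s (i j : ℕ) : ℤ :=
  (([[0,-2,-3,-1],[2,0,1,-3],[3,-1,0,2],[1,3,-2,0]] : List (List ℤ)).getD (i-1) []).getD (j-1) 0

/-- For block-index difference `d`, `blockSC d = (s, c)` means that the corresponding
4×4 block of `M_p` is `s·M₄ + c·I` (and the block of `M_p*` is `s·M₄* − c·I`):
`(1,0)` if `d = 0`; `(-1,4)` if `d ≡ 1 (mod 4)`; `(-1,-4)` if `d ≡ -1 (mod 4)`;
`(1, x+4)` if `d = y·2^x`, `x ≥ 1`, `y ≡ 1 (mod 4)`;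
`(1, -(x+4))` if `d = y·2^x`, `x ≥ 1`, `y ≡ -1 (mod 4)`. -/
def blockSC (d : ℤ) : ℤ × ℤ :=
  if d = 0 then (1, 0)
  else if d % 4 = 1 then (-1, 4)
  else if d % 4 = 3 then (-1, -4)
  else
    let x : ℕ := d.natAbs.factorization 2
    if (d / (2:ℤ)^x) % 4 = 1 then (1, (x:ℤ) + 4) else (1, -((x:ℤ) + 4))

/-- Entry `(i,j)` (1-indexed) of `M_p`, for any `p = 2^n ≥ 4` and `1 ≤ i,j ≤ p`;
the defining block formula depends only on `i` and `j`, not on `p`. -/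
def Ment (i j : ℕ) : ℤ :=
  let d : ℤ := (((j-1)/4 : ℕ) : ℤ) - (((i-1)/4 : ℕ) : ℤ)
  (blockSC d).1 * M4 ((i-1) % 4 + 1) ((j-1) % 4 + 1)
    + (if (i-1) % 4 = (j-1) % 4 then (blockSC d).2 else 0)

/-- Entry `(i,j)` (1-indexed) of `M_p*`. -/
def Ments (i j : ℕ) : ℤ :=
  let d : ℤ := (((j-1)/4 : ℕ) : ℤ) - (((i-1)/4 : ℕ) : ℤ)
  (blockSC d).1 * M4s ((i-1) % 4 + 1) ((j-1) % 4 + 1)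
    + (if (i-1) % 4 = (j-1) % 4 then -(blockSC d).2 else 0)

/-- The `p × p` matrix `M_p`, `p = 2^n`, as a function on 1-based indices
(entries outside the index range `1,…,p` are set to `0`). -/
def Mp (n i j : ℕ) : ℤ :=
  if 1 ≤ i ∧ i ≤ 2^n ∧ 1 ≤ j ∧ j ≤ 2^n then Ment i j else 0

/-- The `p × p` matrix `M_p*`, `p = 2^n`, as a function on 1-based indices. -/
def Mps (n i j : ℕ) : ℤ :=
  if 1 ≤ i ∧ i ≤ 2^n ∧ 1 ≤ j ∧ j ≤ 2^n then Ments i j else 0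

/-- The base mappings `σ_{4,k}` : `sigma4 k i = σ_{4,k}(i)` (value `0` at the
undefined point `i = k`). -/
def sigma4 (k i : ℕ) : ℕ :=
  (([[0,4,2,3],[3,0,4,1],[4,1,0,2],[2,3,1,0]] : List (List ℕ)).getD (k-1) []).getD (i-1) 0

/-- The mappings `σ_{p,k}` for `p = 2^n`: `sigma n k i = σ_{2^n, k}(i)`
(value `0` at the undefined point `i = k`, and junk values for `n < 2`). -/
def sigma : ℕ → ℕ → ℕ → ℕ
  | 0, _, _ => 0
  | 1, _, _ => 0
  | 2, k, i => sigma4 k i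
  | n+3, k, i =>
    let P := 2^(n+2)
    if k ≤ P then
      if i = k + P then i
      else if i ≤ P then sigma (n+2) k i + P
      else sigma (n+2) k (i - P)
    else
      if i = k - P then i
      else if i ≤ P then sigma (n+2) (k - P) i + P
      else sigma (n+2) (k - P) (i - P)


set_option maxRecDepth 4000

section Aux

lemma blockSC_zeroX : blockSC 0 = (1, 0) := by
  unfold blockSC; rfl

lemma blockSC_fstX (d : ℤ) : (blockSC d).1 = if d % 2 = 0 then 1 else -1 := by
  by_cases h1 : d = 0
  · simp [blockSC, h1]
  by_cases h2 : d % 4 = 1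
  · simp only [blockSC, if_neg h1, if_pos h2]; simp; omega
  by_cases h3 : d % 4 = 3
  · simp only [blockSC, if_neg h1, if_neg h2, if_pos h3]; simp; omega
  · simp only [blockSC, if_neg h1, if_neg h2, if_neg h3]
    rw [apply_ite Prod.fst]; simp; omega

lemma fact2X (q : ℤ) (hq : q % 2 = 1) (x : ℕ) :
    ((q * 2 ^ x).natAbs).factorization 2 = x := by
  have hq0 : q.natAbs ≠ 0 := by simp; omega
  have h2 : ¬ (2 ∣ q.natAbs) := by
    rw [← Int.natAbs_natCast 2, Int.natAbs_dvd_natAbs]; omega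
  have h1 : (q * 2 ^ x).natAbs = q.natAbs * 2 ^ x := by
    rw [Int.natAbs_mul, Int.natAbs_pow]; rfl
  rw [h1, Nat.factorization_mul hq0 (by positivity),
    Nat.Prime.factorization_pow Nat.prime_two]
  simp [Nat.factorization_eq_zero_of_not_dvd h2]

lemma blockSC_oddX (d : ℤ) (h : d % 2 = 1) :
    blockSC d = if d % 4 = 1 then (-1, 4) else (-1, -4) := by
  have h0 : d ≠ 0 := by omega
  have h34 : d % 4 = 1 ∨ d % 4 = 3 := by omega
  unfold blockSC
  rcases h34 with h4 | h4 <;> simp [h0, h4]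

lemma blockSC_evalX (q : ℤ) (hq : q % 2 = 1) (x : ℕ) (hx : 1 ≤ x) :
    blockSC (q * 2 ^ x) = if q % 4 = 1 then (1, (x:ℤ) + 4) else (1, -((x:ℤ) + 4)) := by
  have h0 : q * 2 ^ x ≠ 0 := by
    apply mul_ne_zero (by omega) (by positivity)
  have hdvd : (2:ℤ) ∣ q * 2 ^ x := Dvd.dvd.mul_left (dvd_pow_self 2 (by omega)) q
  have hm1 : ¬ (q * 2 ^ x) % 4 = 1 := by omega
  have hm3 : ¬ (q * 2 ^ x) % 4 = 3 := by omega
  have hq4 : q % 4 = 1 ∨ q % 4 = 3 := by omega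
  unfold blockSC
  rw [if_neg h0, if_neg hm1, if_neg hm3]
  simp only [fact2X q hq x]
  rw [Int.mul_ediv_cancel q (by positivity : (2:ℤ)^x ≠ 0)]

lemma exists_odd_powX (d : ℤ) (h0 : d ≠ 0) (he : d % 2 = 0) :
    ∃ (x : ℕ) (q : ℤ), 1 ≤ x ∧ q % 2 = 1 ∧ d = q * 2 ^ x := by
  obtain ⟨k, m, hm, hd⟩ := Nat.exists_eq_pow_mul_and_not_dvd
    (n := d.natAbs) (by simpa using h0) 2 (by norm_num)
  have hmod : (m : ℤ) % 2 = 1 := by omega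
  have habs := Int.natAbs_eq d
  have hk : 1 ≤ k := by
    rcases Nat.eq_zero_or_pos k with hk0 | hk0
    · exfalso
      have h1 : (d.natAbs : ℤ) = m := by rw [hd, hk0]; push_cast; ring
      rcases habs with h | h <;> omega
    · exact hk0
  have hcast : (d.natAbs : ℤ) = (m : ℤ) * 2 ^ k := by rw [hd]; push_cast; ring
  rcases habs with h | h
  · exact ⟨k, m, hk, hmod, by rw [h, hcast]⟩
  · exact ⟨k, -m, hk, by omega, by rw [h, hcast]; ring⟩

lemma CnegX (d : ℤ) : (blockSC (-d)).2 = -(blockSC d).2 := by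
  by_cases h0 : d = 0
  · simp [h0, blockSC_zeroX]
  rcases Int.emod_two_eq d with he | ho
  · obtain ⟨x, q, hx, hq, rfl⟩ := exists_odd_powX d h0 he
    have hq' : (-q) % 2 = 1 := by omega
    rw [show -(q * 2 ^ x) = (-q) * 2 ^ x by ring, blockSC_evalX q hq x hx,
      blockSC_evalX (-q) hq' x hx]
    rcases (show q % 4 = 1 ∨ q % 4 = 3 by omega) with h | h
    · rw [if_pos h, if_neg (show ¬ (-q) % 4 = 1 by omega)]
    · rw [if_neg (show ¬ q % 4 = 1 by omega), if_pos (show (-q) % 4 = 1 by omega)]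
      ring
  · have ho' : (-d) % 2 = 1 := by omega
    rw [blockSC_oddX d ho, blockSC_oddX (-d) ho']
    rcases (show d % 4 = 1 ∨ d % 4 = 3 by omega) with h | h
    · rw [if_pos h, if_neg (show ¬ (-d) % 4 = 1 by omega)]
    · rw [if_neg (show ¬ d % 4 = 1 by omega), if_pos (show (-d) % 4 = 1 by omega)]
      norm_num

lemma CpowX (x : ℕ) : (blockSC ((2:ℤ) ^ x)).2 = (x : ℤ) + 4 := by
  rcases Nat.eq_zero_or_pos x with h | h
  · subst h; rw [show (2:ℤ)^0 = 1 by norm_num, blockSC_oddX 1 (by norm_num)]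
    norm_num
  · rw [show (2:ℤ)^x = 1 * 2^x by ring, blockSC_evalX 1 (by norm_num) x h]
    norm_num

lemma CBX (m : ℕ) (d : ℤ) (hd0 : 0 < d) (hdB : d < 2 ^ m) (hne : 2 * d ≠ 2 ^ m) :
    (blockSC (2 ^ m - d)).2 = -(blockSC d).2 := by
  rcases Int.emod_two_eq d with he | ho
  · obtain ⟨x, q, hx, hq, rfl⟩ := exists_odd_powX d (by omega) he
    have hp : (0:ℤ) < 2 ^ x := by positivity
    have hq0 : 0 < q := by nlinarith
    have hq1 : 1 ≤ q := hq0
    have h2x : (2:ℤ) ^ x ≤ q * 2 ^ x := by nlinarith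
    have hxm : x < m := by
      by_contra hc
      have : (2:ℤ) ^ m ≤ 2 ^ x := pow_le_pow_right₀ (by norm_num) (by omega)
      omega
    have hxm2 : x ≤ m - 2 := by
      by_contra hc
      have hx1 : x = m - 1 := by omega
      have hpow : (2:ℤ) ^ m = 2 * 2 ^ x := by
        rw [show m = x + 1 by omega, pow_succ]; ring
      have : q = 1 := by nlinarith
      rw [this] at hne; omega
    have hsplit : (2:ℤ) ^ m - q * 2 ^ x = (2 ^ (m - x) - q) * 2 ^ x := by
      rw [sub_mul, ← pow_add, show m - x + x = m by omega]
    have h4 : (4:ℤ) ∣ 2 ^ (m - x) := by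
      refine ⟨2 ^ (m - x - 2), ?_⟩
      rw [show m - x = 2 + (m - x - 2) by omega, pow_add]; norm_num
    have hq'2 : (2 ^ (m - x) - q) % 2 = 1 := by omega
    rw [hsplit, blockSC_evalX _ hq'2 x hx, blockSC_evalX q hq x hx]
    rcases (show q % 4 = 1 ∨ q % 4 = 3 by omega) with h | h
    · rw [if_pos h, if_neg (show ¬ (2 ^ (m - x) - q) % 4 = 1 by omega)]
    · rw [if_neg (show ¬ q % 4 = 1 by omega),
        if_pos (show (2 ^ (m - x) - q) % 4 = 1 by omega)]
      ring
  · have hm : 2 ≤ m := by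
      rcases Nat.lt_or_ge m 2 with h | h
      · interval_cases m <;> omega
      · exact h
    have h4 : (4:ℤ) ∣ 2 ^ m := by
      refine ⟨2 ^ (m - 2), ?_⟩
      rw [show m = 2 + (m-2) by omega, pow_add]; norm_num
    have ho' : (2 ^ m - d) % 2 = 1 := by omega
    rw [blockSC_oddX d ho, blockSC_oddX (2 ^ m - d) ho']
    rcases (show d % 4 = 1 ∨ d % 4 = 3 by omega) with h | h
    · rw [if_pos h, if_neg (show ¬ (2 ^ m - d) % 4 = 1 by omega)]
    · rw [if_neg (show ¬ d % 4 = 1 by omega),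
        if_pos (show (2 ^ m - d) % 4 = 1 by omega)]
      norm_num

/-- Residue permutation induced by `σ̂` within 4-blocks. -/
def Pi4 : ℕ → ℕ
  | 0 => 0 | 1 => 3 | 2 => 1 | _ => 2

/-- Block offset induced by `σ̂`. -/
def E4 (a : ℕ) : ℤ := if a = 0 then 0 else 1

lemma GgenX (d : ℤ) (a b : ℕ) (ha : a < 4) (hb : b < 4) :
    (blockSC d).1 * M4 (a+1) (b+1) + (if a = b then (blockSC d).2 else 0)
    = (blockSC (-d + E4 a - E4 b)).1 * M4s (Pi4 a + 1) (Pi4 b + 1)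
      + (if Pi4 a = Pi4 b then -(blockSC (-d + E4 a - E4 b)).2 else 0) := by
  interval_cases a <;> interval_cases b <;>
    norm_num [M4, M4s, Pi4, E4, blockSC_fstX] <;>
    first
      | (rw [CnegX, neg_neg])
      | (split_ifs <;> omega)

lemma G1X (m : ℕ) (hm : 1 ≤ m) (d : ℤ) (b : ℕ) (hb : b < 4) (hdB : d < 2 ^ m)
    (hexc : b = 0 → (0 < d ∧ 2 * d ≠ 2 ^ m)) :
    (blockSC d).1 * M4 1 (b+1) + (if 0 = b then (blockSC d).2 else 0)
    = (blockSC (2 ^ m - d - E4 b)).1 * M4s 1 (Pi4 b + 1)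
      + (if 0 = Pi4 b then -(blockSC (2 ^ m - d - E4 b)).2 else 0) := by
  obtain ⟨K, hK⟩ : ∃ K : ℤ, 2 ^ m = 2 * K :=
    ⟨2 ^ (m-1), by conv_lhs => rw [show m = 1 + (m-1) by omega, pow_add, pow_one]⟩
  interval_cases b <;> norm_num [M4, M4s, Pi4, E4, blockSC_fstX]
  · rw [CBX m d (hexc rfl).1 hdB (hexc rfl).2, neg_neg]
  all_goals split_ifs <;> omega

lemma G2X (m : ℕ) (hm : 1 ≤ m) (d : ℤ) (a : ℕ) (ha : a < 4) (hdB : d < 2 ^ m)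
    (hexc : a = 0 → (0 < d ∧ 2 * d ≠ 2 ^ m)) :
    (blockSC (-d)).1 * M4 (a+1) 1 + (if a = 0 then (blockSC (-d)).2 else 0)
    = (blockSC (d + E4 a - 2 ^ m)).1 * M4s (Pi4 a + 1) 1
      + (if Pi4 a = 0 then -(blockSC (d + E4 a - 2 ^ m)).2 else 0) := by
  obtain ⟨K, hK⟩ : ∃ K : ℤ, 2 ^ m = 2 * K :=
    ⟨2 ^ (m-1), by conv_lhs => rw [show m = 1 + (m-1) by omega, pow_add, pow_one]⟩
  interval_cases a <;> norm_num [M4, M4s, Pi4, E4, blockSC_fstX]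
  · rw [CnegX d, show d - 2 ^ m = -(2 ^ m - d) by ring, CnegX,
      CBX m d (hexc rfl).1 hdB (hexc rfl).2]
    ring
  all_goals split_ifs <;> omega

/-- The closed form of `σ_{2^n,1}`. -/
def tauv (n i : ℕ) : ℕ :=
  if i % 4 = 3 then 2^n + 1 - i else if i % 4 = 0 then 2^n + 3 - i else 2^n + 2 - i

lemma sigma_eqX (n : ℕ) (hn : 2 ≤ n) (i : ℕ) (h2 : 2 ≤ i) (hi : i ≤ 2^n) :
    sigma n 1 i = tauv n i := by
  induction n, hn using Nat.le_induction generalizing i with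
  | base => interval_cases i <;> decide
  | succ n hn ih =>
    obtain ⟨t, rfl⟩ : ∃ t, n = t + 2 := ⟨n - 2, by omega⟩
    have hP4 : 2^(t+2) % 4 = 0 := by
      have : 2^(t+2) = 4 * 2^t := by rw [pow_add]; ring
      omega
    have hPP : 2^(t+2+1) = 2 * 2^(t+2) := by rw [pow_succ]; ring
    show sigma (t+3) 1 i = _
    rw [sigma]
    simp only [show (1:ℕ) ≤ 2^(t+2) from Nat.one_le_two_pow]
    rw [if_pos trivial]
    split_ifs with h1 h2'
    · unfold tauv
      have : i % 4 = 1 := by omega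
      simp only [this]
      norm_num
      omega
    · rw [ih i h2 (by omega)]
      unfold tauv
      split_ifs <;> omega
    · have h1' : 2 ≤ i - 2^(t+2) := by omega
      rw [ih (i - 2^(t+2)) h1' (by omega)]
      unfold tauv
      have : (i - 2^(t+2)) % 4 = i % 4 := by omega
      rw [this]
      split_ifs <;> omega

lemma pow_splitX (n : ℕ) (hn : 3 ≤ n) :
    (2:ℕ)^n = 4 * 2^(n-2) ∧ (2:ℕ)^(n-1) = 2 * 2^(n-2) := by
  constructor
  · have h := pow_add 2 2 (n-2)
    rw [show 2 + (n-2) = n by omega] at h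
    omega
  · have h := pow_add 2 1 (n-2)
    rw [show 1 + (n-2) = n - 1 by omega] at h
    omega

lemma tau_dataX (n : ℕ) (hn : 3 ≤ n) (i : ℕ) (h2 : 2 ≤ i) (hi : i ≤ 2^n) :
    1 ≤ tauv n i ∧ tauv n i ≤ 2^n ∧
    (tauv n i - 1) % 4 = Pi4 ((i-1) % 4) ∧
    (tauv n i - 1) / 4 = 2^(n-2) - (i-1)/4 - (if (i-1) % 4 = 0 then 0 else 1) := by
  obtain ⟨h4, _⟩ := pow_splitX n hn
  unfold tauv
  obtain ⟨B, hB⟩ : ∃ B, (2:ℕ)^(n-2) = B := ⟨_, rfl⟩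
  obtain ⟨p, hp⟩ : ∃ p, (2:ℕ)^n = p := ⟨_, rfl⟩
  rw [hB] at h4 ⊢
  rw [hp] at h4 hi ⊢
  clear hB hp
  rcases (show i % 4 = 0 ∨ i % 4 = 1 ∨ i % 4 = 2 ∨ i % 4 = 3 by omega) with h | h | h | h <;>
    (have hr : (i-1) % 4 = (i % 4 + 3) % 4 := by omega) <;>
    rw [h] at hr <;> norm_num at hr <;>
    simp only [h, hr, Pi4] <;> split_ifs <;> first | contradiction | omega

lemma main_entX (n : ℕ) (hn : 3 ≤ n) (i j : ℕ) (hi1 : 1 ≤ i) (hi2 : i ≤ 2^n)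
    (hj1 : 1 ≤ j) (hj2 : j ≤ 2^n)
    (hx1 : ¬(i = 1 ∧ j = 1 + 2^(n-1))) (hx2 : ¬(i = 1 + 2^(n-1) ∧ j = 1)) :
    Ment i j = Ments (if i = 1 then 1 else tauv n i) (if j = 1 then 1 else tauv n j) := by
  obtain ⟨h4, h2'⟩ := pow_splitX n hn
  have hpow : ((2^(n-2) : ℕ) : ℤ) = (2:ℤ)^(n-2) := by push_cast; ring
  by_cases hi : i = 1 <;> by_cases hj : j = 1
  · subst hi; subst hj
    norm_num [Ment, Ments, blockSC_zeroX, M4, M4s]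
  · subst hi
    rw [if_pos rfl, if_neg hj]
    obtain ⟨ht1, ht2, ht3, ht4⟩ := tau_dataX n hn j (by omega) hj2
    have hexc : (j-1) % 4 = 0 → 0 < (((j-1)/4 : ℕ) : ℤ) ∧
        2 * (((j-1)/4 : ℕ) : ℤ) ≠ 2^(n-2) := by
      intro hb0
      constructor
      · have : 1 ≤ (j-1)/4 := by omega
        exact_mod_cast this
      · intro hc
        rw [← hpow] at hc
        have hc' : 2 * ((j-1)/4) = 2^(n-2) := by exact_mod_cast hc
        exact hx1 ⟨rfl, by omega⟩
    have key := G1X (n-2) (by omega) (((j-1)/4 : ℕ) : ℤ) ((j-1) % 4) (by omega)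
      (by rw [← hpow]; exact_mod_cast (by omega : (j-1)/4 < 2^(n-2))) hexc
    unfold Ment Ments
    rw [ht3, ht4]
    have hc1 : ((((j-1)/4 : ℕ)) : ℤ) - (((1-1)/4 : ℕ) : ℤ) = (((j-1)/4 : ℕ) : ℤ) := by
      norm_num
    have hc2 : (((2^(n-2) - (j-1)/4 - (if (j-1) % 4 = 0 then 0 else 1) : ℕ)) : ℤ)
        - (((1-1)/4 : ℕ) : ℤ) = (2:ℤ)^(n-2) - (((j-1)/4 : ℕ) : ℤ) - E4 ((j-1) % 4) := by
      unfold E4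
      rw [← hpow]
      split_ifs <;> (norm_num; omega)
    rw [hc1, hc2]
    norm_num at key ⊢
    exact key
  · subst hj
    rw [if_pos rfl, if_neg hi]
    obtain ⟨ht1, ht2, ht3, ht4⟩ := tau_dataX n hn i (by omega) hi2
    have hexc : (i-1) % 4 = 0 → 0 < (((i-1)/4 : ℕ) : ℤ) ∧
        2 * (((i-1)/4 : ℕ) : ℤ) ≠ 2^(n-2) := by
      intro hb0
      constructor
      · have : 1 ≤ (i-1)/4 := by omega
        exact_mod_cast this
      · intro hc
        rw [← hpow] at hc
        have hc' : 2 * ((i-1)/4) = 2^(n-2) := by exact_mod_cast hc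
        exact hx2 ⟨by omega, rfl⟩
    have key := G2X (n-2) (by omega) (((i-1)/4 : ℕ) : ℤ) ((i-1) % 4) (by omega)
      (by rw [← hpow]; exact_mod_cast (by omega : (i-1)/4 < 2^(n-2))) hexc
    unfold Ment Ments
    rw [ht3, ht4]
    have hc1 : (((1-1)/4 : ℕ) : ℤ) - ((((i-1)/4 : ℕ)) : ℤ) = -(((i-1)/4 : ℕ) : ℤ) := by
      norm_num
    have hc2 : (((1-1)/4 : ℕ) : ℤ)
        - (((2^(n-2) - (i-1)/4 - (if (i-1) % 4 = 0 then 0 else 1) : ℕ)) : ℤ)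
        = (((i-1)/4 : ℕ) : ℤ) + E4 ((i-1) % 4) - (2:ℤ)^(n-2) := by
      unfold E4
      rw [← hpow]
      split_ifs <;> (norm_num; omega)
    rw [hc1, hc2]
    norm_num at key ⊢
    exact key
  · obtain ⟨hti1, hti2, hti3, hti4⟩ := tau_dataX n hn i (by omega) hi2
    obtain ⟨htj1, htj2, htj3, htj4⟩ := tau_dataX n hn j (by omega) hj2
    rw [if_neg hi, if_neg hj]
    have key := GgenX ((((j-1)/4 : ℕ) : ℤ) - (((i-1)/4 : ℕ) : ℤ)) ((i-1) % 4) ((j-1) % 4)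
      (by omega) (by omega)
    unfold Ment Ments
    rw [hti3, hti4, htj3, htj4]
    have hc2 : (((2^(n-2) - (j-1)/4 - (if (j-1) % 4 = 0 then 0 else 1) : ℕ)) : ℤ)
        - (((2^(n-2) - (i-1)/4 - (if (i-1) % 4 = 0 then 0 else 1) : ℕ)) : ℤ)
        = -((((j-1)/4 : ℕ) : ℤ) - (((i-1)/4 : ℕ) : ℤ)) + E4 ((i-1) % 4) - E4 ((j-1) % 4) := by
      unfold E4
      split_ifs <;> push_cast [← hpow] <;> omega
    rw [hc2]
    exact key

end Aux

/-- For `p = 2^n` with `n ≥ 3`, let `σ̂` extend `σ_{p,1}` by `σ̂(1) = 1`.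
Then `M_p[i,j] = M_p*[σ̂(i), σ̂(j)]` for all `i, j` from 1 to `p`, except that
`M_p[1, 1+p/2] = −M_p*[σ̂(1), σ̂(1+p/2)] = n+1` and
`M_p[1+p/2, 1] = −M_p*[σ̂(1+p/2), σ̂(1)] = −(n+1)`. -/
theorem stmt15 (n p : ℕ) (hn : 3 ≤ n) (hp : p = 2^n) :
    let σh : ℕ → ℕ := fun i => if i = 1 then 1 else sigma n 1 i
    (∀ i ∈ Set.Icc 1 p, ∀ j ∈ Set.Icc 1 p,
      ¬(i = 1 ∧ j = 1 + p/2) → ¬(i = 1 + p/2 ∧ j = 1) →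
        Mp n i j = Mps n (σh i) (σh j)) ∧
    (Mp n 1 (1 + p/2) = -(Mps n (σh 1) (σh (1 + p/2))) ∧ Mp n 1 (1 + p/2) = (n:ℤ) + 1) ∧
    (Mp n (1 + p/2) 1 = -(Mps n (σh (1 + p/2)) (σh 1)) ∧
      Mp n (1 + p/2) 1 = -((n:ℤ) + 1)) := by
  intro σh
  subst hp
  obtain ⟨h4, h2'⟩ := pow_splitX n hn
  have h3' : (2:ℕ)^(n-1) = 4 * 2^(n-3) := by
    have h := pow_add 2 2 (n-3)
    rw [show 2 + (n-3) = n-1 by omega] at h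
    omega
  have hub : 1 ≤ 2^(n-2) := Nat.one_le_two_pow
  have hub3 : 1 ≤ 2^(n-3) := Nat.one_le_two_pow
  have hhalf : 2^n / 2 = 2^(n-1) := by omega
  have hσ : σh = fun i => if i = 1 then 1 else sigma n 1 i := rfl
  have hσv : ∀ x, 1 ≤ x → x ≤ 2^n → σh x = if x = 1 then 1 else tauv n x := by
    intro x h1 hx
    rw [hσ]
    by_cases hx1 : x = 1
    · simp [hx1]
    · simp only [if_neg hx1]
      exact sigma_eqX n (by omega) x (by omega) hx
  have hτrange : ∀ x, 1 ≤ x → x ≤ 2^n → 1 ≤ σh x ∧ σh x ≤ 2^n := by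
    intro x h1 hx
    rw [hσv x h1 hx]
    by_cases hx1 : x = 1
    · rw [if_pos hx1]
      omega
    · rw [if_neg hx1]
      obtain ⟨a, b, _, _⟩ := tau_dataX n hn x (by omega) hx
      exact ⟨a, b⟩
  have hpow3 : ((2^(n-3) : ℕ) : ℤ) = (2:ℤ)^(n-3) := by push_cast; ring
  have hn3 : ((n - 3 : ℕ) : ℤ) + 4 = (n:ℤ) + 1 := by omega
  have hσ1 : σh 1 = 1 := rfl
  have hστ : σh (1 + 2^(n-1)) = 2^(n-1) + 1 := by
    have hx1 : (1:ℕ) ≤ 1 + 2^(n-1) := by omega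
    have hx2 : 1 + 2^(n-1) ≤ 2^n := by omega
    have hne : ¬(1 + 2^(n-1) = 1) := by omega
    rw [hσv (1 + 2^(n-1)) hx1 hx2, if_neg hne]
    unfold tauv
    split_ifs <;> omega
  have hval1 : Ment 1 (1 + 2^(n-1)) = (n:ℤ) + 1 := by
    unfold Ment
    have e1 : (1 + 2^(n-1) - 1) % 4 = 0 := by omega
    have e2 : (1 + 2^(n-1) - 1) / 4 = 2^(n-3) := by omega
    rw [e1, e2, hpow3]
    norm_num [M4]
    rw [CpowX]
    omega
  have hval2 : Ments 1 (2^(n-1) + 1) = -((n:ℤ) + 1) := by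
    unfold Ments
    have e1 : (2^(n-1) + 1 - 1) % 4 = 0 := by omega
    have e2 : (2^(n-1) + 1 - 1) / 4 = 2^(n-3) := by omega
    rw [e1, e2, hpow3]
    norm_num [M4s]
    rw [CpowX]
    omega
  have hval3 : Ment (1 + 2^(n-1)) 1 = -((n:ℤ) + 1) := by
    unfold Ment
    have e1 : (1 + 2^(n-1) - 1) % 4 = 0 := by omega
    have e2 : (1 + 2^(n-1) - 1) / 4 = 2^(n-3) := by omega
    rw [e1, e2, hpow3]
    norm_num [M4]
    rw [show -(2:ℤ)^(n-3) = -((2:ℤ)^(n-3)) by ring, CnegX, CpowX]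
    omega
  have hval4 : Ments (2^(n-1) + 1) 1 = (n:ℤ) + 1 := by
    unfold Ments
    have e1 : (2^(n-1) + 1 - 1) % 4 = 0 := by omega
    have e2 : (2^(n-1) + 1 - 1) / 4 = 2^(n-3) := by omega
    rw [e1, e2, hpow3]
    norm_num [M4s]
    rw [show -(2:ℤ)^(n-3) = -((2:ℤ)^(n-3)) by ring, CnegX, CpowX]
    omega
  have hrange1 : 1 ≤ 1 + 2^(n-1) ∧ 1 + 2^(n-1) ≤ 2^n := by omega
  have hrange2 : 1 ≤ 2^(n-1) + 1 ∧ 2^(n-1) + 1 ≤ 2^n := by omega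
  refine ⟨?_, ⟨?_, ?_⟩, ?_, ?_⟩
  · intro i hi j hj hne1 hne2
    rw [Set.mem_Icc] at hi hj
    obtain ⟨hi1, hi2⟩ := hi
    obtain ⟨hj1, hj2⟩ := hj
    rw [hhalf] at hne1 hne2
    obtain ⟨ha1, ha2⟩ := hτrange i hi1 hi2
    obtain ⟨hb1, hb2⟩ := hτrange j hj1 hj2
    unfold Mp Mps
    rw [if_pos ⟨hi1, hi2, hj1, hj2⟩, if_pos ⟨ha1, ha2, hb1, hb2⟩,
      hσv i hi1 hi2, hσv j hj1 hj2]
    exact main_entX n hn i j hi1 hi2 hj1 hj2 hne1 hne2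
  · unfold Mp Mps
    rw [hhalf, hσ1, hστ, if_pos ⟨by omega, by omega, by omega, by omega⟩,
      if_pos ⟨by omega, by omega, by omega, by omega⟩, hval1, hval2]
    try ring
  · unfold Mp
    rw [hhalf, if_pos ⟨by omega, by omega, by omega, by omega⟩]
    exact hval1
  · unfold Mp Mps
    rw [hhalf, hσ1, hστ, if_pos ⟨by omega, by omega, by omega, by omega⟩,
      if_pos ⟨by omega, by omega, by omega, by omega⟩, hval3, hval4]
    try ring
  · unfold Mp
    rw [hhalf, if_pos ⟨by omega, by omega, by omega, by omega⟩]
    exact hval3
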